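/- In the MU-dec hardness reduction, if the SNF formula f' = x_f ∧ ⋀_{2≤i≤m} G(α_i) is satisfiable, then ω(f') is unsatisfiable: no linear structure M satisfies ω(f') at time 0. -/

import Mathlib

/-! By the last conjunct some `x_i` holds at time 0, and the mutual-exclusion conjuncts make it
the only one, so `π_i` fails at time 0. For `i = 1` the conjunct `¬x₁ ∨ ¬x_f ∨ π₁` forces `¬x_f`,
so the first conjunct forces `X x₁`, against `G(X ¬x₁) ∨ π₁`. For `i > 1` the selector
`G(α_i ∨ π_i)` makes some operand `op` of `α_i` true at time 0, and the mirrored clause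
`G(ϱ(op) ∨ π_i ∨ ¬x_i)` makes `ϱ(op)` true there; but `ϱ(op)` is the negation of `op`. -/

/- LTL in negation normal form (negation only on propositional variables), with
standard semantics over linear time structures `M : ℕ → Set P`. -/

inductive LTL (P : Type) : Type
  | tt : LTL P
  | ff : LTL P
  | var : P → LTL P
  | nvar : P → LTL P
  | and : LTL P → LTL P → LTL P
  | or : LTL P → LTL P → LTL P
  | next : LTL P → LTL P
  | unt : LTL P → LTL P → LTL P   -- strong until U
  | wunt : LTL P → LTL P → LTL P  -- weak until W
  deriving DecidableEq

def Sat {P : Type} (M : ℕ → Set P) : LTL P → ℕ → Prop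
  | .tt, _ => True
  | .ff, _ => False
  | .var p, i => p ∈ M i
  | .nvar p, i => p ∉ M i
  | .and a b, i => Sat M a i ∧ Sat M b i
  | .or a b, i => Sat M a i ∨ Sat M b i
  | .next a, i => Sat M a (i + 1)
  | .unt a b, i => ∃ j, i ≤ j ∧ Sat M b j ∧ ∀ k, i ≤ k → k < j → Sat M a k
  | .wunt a b, i =>
      (∀ j, i ≤ j → Sat M a j) ∨ (∃ j, i ≤ j ∧ Sat M b j ∧ ∀ k, i ≤ k → k < j → Sat M a k)

def LTL.G {P : Type} (a : LTL P) : LTL P := .wunt a .ff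
def LTL.F {P : Type} (a : LTL P) : LTL P := .unt .tt a

def bigAnd {P : Type} (l : List (LTL P)) : LTL P := l.foldr .and .tt
def bigOr {P : Type} (l : List (LTL P)) : LTL P := l.foldr .or .ff

/- Definitional SNF data: an SNF formula `f' = x_f ∧ ⋀_i G(α_i)` is given by the fresh
variable `x_f : P` and a list `cs` of SNF LTL-clauses, each clause being a disjunction
of operands: literals `l`, `X l`, or `F l`. -/

inductive Op (P : Type) : Type
  | lit : P → Bool → Op P   -- literal (variable, sign)
  | nxt : P → Bool → Op P   -- X l
  | ev : P → Bool → Op P    -- F l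
  deriving DecidableEq

def litF {P : Type} (p : P) (b : Bool) : LTL P := if b then .var p else .nvar p

def Op.toLTL {P : Type} : Op P → LTL P
  | .lit p b => litF p b
  | .nxt p b => .next (litF p b)
  | .ev p b => LTL.F (litF p b)

/-- The mirror "ϱ": ϱ l = ∼l, ϱ(X l) = X(∼l), ϱ(F l) = G(∼l). -/
def Op.mirror {P : Type} : Op P → LTL P
  | .lit p b => litF p (!b)
  | .nxt p b => .next (litF p (!b))
  | .ev p b => LTL.G (litF p (!b))

def Op.varOf {P : Type} : Op P → P
  | .lit p _ => p
  | .nxt p _ => p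
  | .ev p _ => p

def LTL.rename {P Q : Type} (r : P → Q) : LTL P → LTL Q
  | .tt => .tt
  | .ff => .ff
  | .var p => .var (r p)
  | .nvar p => .nvar (r p)
  | .and a b => .and (a.rename r) (b.rename r)
  | .or a b => .or (a.rename r) (b.rename r)
  | .next a => .next (a.rename r)
  | .unt a b => .unt (a.rename r) (b.rename r)
  | .wunt a b => .wunt (a.rename r) (b.rename r)

def clauseF {P : Type} (c : List (Op P)) : LTL P := bigOr (c.map Op.toLTL)

variable {P : Type} [DecidableEq P]

/-- `f' = x_f ∧ ⋀_{2 ≤ i ≤ m} G(α_i)`. -/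
def fprime (xf : P) (cs : List (List (Op P))) : LTL P :=
  .and (.var xf) (bigAnd (cs.map fun c => LTL.G (clauseF c)))

/- The reduction formula ω(f') uses fresh variables x₁,…,x_m (m = cs.length + 1,
index 0 corresponding to x₁ and α₁ = x_f); its variable type is `P ⊕ Fin m`. -/

def xvar (cs : List (List (Op P))) (i : Fin (cs.length + 1)) : LTL (P ⊕ Fin (cs.length + 1)) :=
  .var (Sum.inr i)

def nxvar (cs : List (List (Op P))) (i : Fin (cs.length + 1)) : LTL (P ⊕ Fin (cs.length + 1)) :=
  .nvar (Sum.inr i)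

/-- π_i = ⋁_{j ≠ i} x_j. -/
def piF (cs : List (List (Op P))) (i : Fin (cs.length + 1)) : LTL (P ⊕ Fin (cs.length + 1)) :=
  bigOr ((((List.finRange (cs.length + 1)).filter (fun j => j ≠ i))).map (xvar cs))

def alphaF (xf : P) (cs : List (List (Op P))) (i : Fin (cs.length + 1)) :
    LTL (P ⊕ Fin (cs.length + 1)) :=
  if i.val = 0 then .var (Sum.inl xf) else (clauseF (cs.getD (i.val - 1) [])).rename Sum.inl

def opsOf (cs : List (List (Op P))) (i : Fin (cs.length + 1)) : List (Op P) :=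
  if i.val = 0 then [] else cs.getD (i.val - 1) []

/-- The list of conjuncts of ω(f'). -/
def omegaList (xf : P) (cs : List (List (Op P))) : List (LTL (P ⊕ Fin (cs.length + 1))) :=
  [.or (.next (xvar cs 0)) (.or (alphaF xf cs 0) (piF cs 0))]
  ++ ((List.finRange (cs.length + 1)).filter (fun i => i ≠ 0)).map
       (fun i => LTL.G (.or (alphaF xf cs i) (piF cs i)))
  ++ [.or (nxvar cs 0) (.or (.nvar (Sum.inl xf)) (piF cs 0))]
  ++ ((List.finRange (cs.length + 1)).filter (fun i => i ≠ 0)).flatMap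
       (fun i => (opsOf cs i).map
         (fun op => LTL.G (.or (op.mirror.rename Sum.inl) (.or (piF cs i) (nxvar cs i)))))
  ++ ((List.finRange (cs.length + 1)).filter (fun j => j ≠ 0)).map
       (fun j => .or (nxvar cs 0) (nxvar cs j))
  ++ (List.finRange (cs.length + 1)).flatMap
       (fun i => (List.finRange (cs.length + 1)).filterMap
         (fun j => if 0 < i.val ∧ i.val < j.val
                   then some (LTL.G (.or (nxvar cs i) (nxvar cs j))) else none))
  ++ [.or (LTL.G (.next (nxvar cs 0))) (piF cs 0)]
  ++ [bigOr ((List.finRange (cs.length + 1)).map (xvar cs))]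

def omegaF (xf : P) (cs : List (List (Op P))) : LTL (P ⊕ Fin (cs.length + 1)) :=
  bigAnd (omegaList xf cs)

/-- Side conditions guaranteed by the definitional SNF transformation: no two operands
under the same `G` share a propositional variable, and the conjunction of the
`G(α_i)` (without `x_f`) has a model setting `x_f` to FALSE at time 0. -/
def SNFside (xf : P) (cs : List (List (Op P))) : Prop :=
  (∀ c ∈ cs, (c.map Op.varOf).Nodup) ∧
  ∃ M : ℕ → Set P, (∀ c ∈ cs, Sat M (LTL.G (clauseF c)) 0) ∧ xf ∉ M 0

/-- ω(f') is minimal unsatisfiable: unsatisfiable, but removing (weakening to TRUE)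
any single conjunct yields a satisfiable formula. -/
def MUomega (xf : P) (cs : List (List (Op P))) : Prop :=
  (¬ ∃ M, Sat M (omegaF xf cs) 0) ∧
  ∀ g ∈ omegaList xf cs, ∃ M, Sat M (bigAnd ((omegaList xf cs).erase g)) 0

section Semantics

variable {Q R : Type} {M : ℕ → Set Q} {t : ℕ}

theorem sat_bigAnd {l : List (LTL Q)} : Sat M (bigAnd l) t ↔ ∀ a ∈ l, Sat M a t := by
  induction l with
  | nil => simp [bigAnd, Sat]
  | cons a l ih => simp [bigAnd, Sat, ← ih]

theorem sat_bigOr {l : List (LTL Q)} : Sat M (bigOr l) t ↔ ∃ a ∈ l, Sat M a t := by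
  induction l with
  | nil => simp [bigOr, Sat]
  | cons a l ih => simp [bigOr, Sat, ← ih]

theorem sat_G {a : LTL Q} : Sat M a.G t ↔ ∀ j, t ≤ j → Sat M a j := by
  simp [LTL.G, Sat]

theorem sat_F {a : LTL Q} : Sat M a.F t ↔ ∃ j, t ≤ j ∧ Sat M a j := by
  simp [LTL.F, Sat]

theorem sat_litF_not (p : Q) (b : Bool) : Sat M (litF p !b) t ↔ ¬ Sat M (litF p b) t := by
  cases b <;> simp [litF, Sat]

theorem Op.sat_mirror_iff_not (op : Op Q) : Sat M op.mirror t ↔ ¬ Sat M op.toLTL t := by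
  cases op <;> simp [Op.mirror, Op.toLTL, Sat, sat_G, sat_F, sat_litF_not]

theorem sat_clauseF {c : List (Op Q)} : Sat M (clauseF c) t ↔ ∃ op ∈ c, Sat M op.toLTL t := by
  simp [clauseF, sat_bigOr]

theorem sat_rename (r : R → Q) (a : LTL R) :
    Sat M (a.rename r) t ↔ Sat (fun n => r ⁻¹' M n) a t := by
  induction a generalizing t <;> simp [LTL.rename, Sat, *]

end Semantics

section Omega

variable {Q : Type} {xf : Q} {cs : List (List (Op Q))} {M : ℕ → Set (Q ⊕ Fin (cs.length + 1))}

theorem sat_piF {i : Fin (cs.length + 1)} {t : ℕ} :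
    Sat M (piF cs i) t ↔ ∃ j ≠ i, Sum.inr j ∈ M t := by
  simp [piF, sat_bigOr, xvar, Sat]

theorem sat_alphaF_of_ne_zero {i : Fin (cs.length + 1)} (hi : i ≠ 0) {t : ℕ} :
    Sat M (alphaF xf cs i) t ↔ ∃ op ∈ opsOf cs i, Sat (fun n => Sum.inl ⁻¹' M n) op.toLTL t := by
  simp [alphaF, opsOf, Fin.val_ne_zero_iff.mpr hi, sat_rename, sat_clauseF]

theorem selector_mem_omegaList {i : Fin (cs.length + 1)} (hi : i ≠ 0) :
    LTL.G (.or (alphaF xf cs i) (piF cs i)) ∈ omegaList xf cs := by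
  unfold omegaList
  grind

theorem mirror_mem_omegaList {i : Fin (cs.length + 1)} (hi : i ≠ 0) {op : Op Q}
    (hop : op ∈ opsOf cs i) :
    LTL.G (.or (op.mirror.rename Sum.inl) (.or (piF cs i) (nxvar cs i))) ∈ omegaList xf cs := by
  unfold omegaList
  grind

theorem exists_mem_of_sat_omegaF (h : Sat M (omegaF xf cs) 0) : ∃ i, Sum.inr i ∈ M 0 := by
  have := sat_bigAnd.mp h (bigOr ((List.finRange (cs.length + 1)).map (xvar cs)))
    (by simp [omegaList])
  simpa [sat_bigOr, xvar, Sat] using this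

theorem not_mem_of_lt_of_sat_omegaF (h : Sat M (omegaF xf cs) 0) {i j : Fin (cs.length + 1)}
    (hij : i < j) (hi : Sum.inr i ∈ M 0) (hj : Sum.inr j ∈ M 0) : False := by
  have hω := sat_bigAnd.mp h
  rcases eq_or_ne i 0 with rfl | hi0
  · rcases hω (.or (nxvar cs 0) (nxvar cs j)) (by simp [omegaList, nxvar, hij.ne']) with
      hni | hnj <;> contradiction
  · have hexcl := hω (LTL.G (.or (nxvar cs i) (nxvar cs j)))
      (by simp [omegaList, nxvar, LTL.G, Fin.pos_iff_ne_zero, hi0, hij])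
    rcases sat_G.mp hexcl 0 le_rfl with hni | hnj <;> contradiction

theorem eq_of_mem_of_sat_omegaF (h : Sat M (omegaF xf cs) 0) {i j : Fin (cs.length + 1)}
    (hi : Sum.inr i ∈ M 0) (hj : Sum.inr j ∈ M 0) : i = j := by
  rcases lt_trichotomy i j with hij | hij | hij
  · exact (not_mem_of_lt_of_sat_omegaF h hij hi hj).elim
  · exact hij
  · exact (not_mem_of_lt_of_sat_omegaF h hij hj hi).elim

theorem not_sat_piF_of_sat_omegaF (h : Sat M (omegaF xf cs) 0) {i : Fin (cs.length + 1)}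
    (hi : Sum.inr i ∈ M 0) : ¬ Sat M (piF cs i) 0 := by
  rw [sat_piF]
  rintro ⟨j, hji, hj⟩
  exact hji (eq_of_mem_of_sat_omegaF h hj hi)

theorem not_mem_zero_of_sat_omegaF (h : Sat M (omegaF xf cs) 0) : Sum.inr 0 ∉ M 0 := by
  intro h0
  have hω := sat_bigAnd.mp h
  have hπ := not_sat_piF_of_sat_omegaF h h0
  have hxf : Sum.inl xf ∉ M 0 := by
    rcases hω (.or (nxvar cs 0) (.or (.nvar (Sum.inl xf)) (piF cs 0))) (by simp [omegaList]) with
      hn0 | hnxf | hπ'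
    · contradiction
    · exact hnxf
    · contradiction
  have hx1 : Sum.inr 0 ∈ M 1 := by
    rcases hω (.or (.next (xvar cs 0)) (.or (alphaF xf cs 0) (piF cs 0))) (by simp [omegaList]) with
      hnext | hxf' | hπ'
    · exact hnext
    · simp only [alphaF, Fin.val_zero, if_true] at hxf'
      contradiction
    · contradiction
  rcases hω (.or (LTL.G (.next (nxvar cs 0))) (piF cs 0)) (by simp [omegaList]) with hG | hπ'
  · exact sat_G.mp hG 0 le_rfl hx1
  · contradiction

theorem not_mem_of_ne_zero_of_sat_omegaF (h : Sat M (omegaF xf cs) 0) {i : Fin (cs.length + 1)}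
    (hi0 : i ≠ 0) : Sum.inr i ∉ M 0 := by
  intro hi
  have hω := sat_bigAnd.mp h
  have hπ := not_sat_piF_of_sat_omegaF h hi
  obtain ⟨op, hop, hsat⟩ : ∃ op ∈ opsOf cs i, Sat (fun n => Sum.inl ⁻¹' M n) op.toLTL 0 := by
    rcases sat_G.mp (hω _ (selector_mem_omegaList hi0)) 0 le_rfl with hα | hπ'
    · exact (sat_alphaF_of_ne_zero hi0).mp hα
    · contradiction
  rcases sat_G.mp (hω _ (mirror_mem_omegaList hi0 hop)) 0 le_rfl with hϱ | hπ' | hni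
  · exact (Op.sat_mirror_iff_not op).mp ((sat_rename _ _).mp hϱ) hsat
  · contradiction
  · contradiction

theorem not_sat_omegaF : ¬ Sat M (omegaF xf cs) 0 := by
  intro h
  obtain ⟨i, hi⟩ := exists_mem_of_sat_omegaF h
  rcases eq_or_ne i 0 with rfl | hi0
  · exact not_mem_zero_of_sat_omegaF h hi
  · exact not_mem_of_ne_zero_of_sat_omegaF h hi0 hi

end Omega

theorem stmt14_general (xf : P) (cs : List (List (Op P))) :
    ¬ ∃ M, Sat M (omegaF xf cs) 0 := fun ⟨_, hM⟩ => not_sat_omegaF hM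

/-- If f' is satisfiable then ω(f') is unsatisfiable: no linear structure satisfies
ω(f') at time 0. -/
theorem stmt14 (xf : P) (cs : List (List (Op P))) (hsnf : SNFside xf cs)
    (hsat : ∃ M : ℕ → Set P, Sat M (fprime xf cs) 0) :
    ¬ ∃ M, Sat M (omegaF xf cs) 0 :=
  stmt14_general xf cs
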